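/- arXiv:1102.4036 — 4 statements merged into one kernel-verified Lean document; each statement's English description precedes it below -/
import Mathlib

section
/- Let V be a finite-dimensional vector space over a field of characteristic ≠ 2 with a nondegenerate quadratic form Q (with bilinear form β), graded V = ⊕_a V^a with β(V^a,V^b)=0 for a+b≠0, and let A : V → V be β-skew (β(Av,v')=−β(v,Av')) with A(V^a) ⊆ V^{a+2}. Then A^{2n} : V^{-2n} → V^{2n} is an isomorphism for all n ≥ 1 if and only if for all n ≥ 1 the map A^n : V^0 → V^{2n} is surjective and Q restricted to ker(A^n : V^0 → V^{2n}) is nondegenerate. -/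
/-!
Put `P = A ^ n`. It maps `V^{-2n} → V^0 → V^{2n}`, `P * P = A ^ (2n)`, and `P` is `(-1)^n`-self-adjoint
for the polar form, which pairs `V^a` nondegenerately with `V^{-a}`.

If `P * P : V^{-2n} → V^{2n}` is bijective, then `P (V^0) ⊇ P (P V^{-2n}) = V^{2n}`, and
`V^0 = (V^0 ∩ ker P) + P V^{-2n}` where the second summand is orthogonal to `ker P`, so the form stays
nondegenerate on `V^0 ∩ ker P`. Conversely, if `P (P u) = 0` then `P u ∈ V^0 ∩ ker P` is orthogonal to
all of `V^0 ∩ ker P`, hence zero, and then `u` is orthogonal to `P V^0 = V^{2n}`, hence zero; as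
`dim V^{-2n} = dim V^{2n}`, injectivity of `P * P` on `V^{-2n}` gives its surjectivity.
-/

open QuadraticMap

section Polar

variable {R V : Type*} [CommRing R] [AddCommGroup V] [Module R V]

def PolarNondegenerate (Q : QuadraticForm R V) (S T : Submodule R V) : Prop :=
  ∀ x ∈ S, (∀ y ∈ T, polar Q x y = 0) → x = 0

theorem polarNondegenerate_neg_of_iSup_eq_top {ι : Type*} [AddGroup ι] {Q : QuadraticForm R V}
    (hnd : ∀ v : V, (∀ w, polar Q v w = 0) → v = 0) {Vg : ι → Submodule R V}
    (hV : ⨆ i, Vg i = ⊤)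
    (hortho : ∀ a b : ι, a + b ≠ 0 → ∀ x ∈ Vg a, ∀ y ∈ Vg b, polar Q x y = 0) (a : ι) :
    PolarNondegenerate Q (Vg a) (Vg (-a)) := by
  intro x hx hxT
  refine hnd x fun w => ?_
  have hle : ⨆ i, Vg i ≤ LinearMap.ker (polarBilin Q x) := by
    refine iSup_le fun b y hy => ?_
    rw [LinearMap.mem_ker, polarBilin_apply_apply]
    by_cases hb : b = -a
    · exact hxT y (hb ▸ hy)
    · exact hortho a b (fun h => hb (eq_neg_of_add_eq_zero_right h)) x hx y hy
  rw [hV] at hle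
  simpa using hle (Submodule.mem_top (x := w))

theorem polar_pow_left {Q : QuadraticForm R V} {A : Module.End R V}
    (hskew : ∀ v w, polar Q (A v) w = -polar Q v (A w)) (m : ℕ) (v w : V) :
    polar Q ((A ^ m) v) w = (-1) ^ m * polar Q v ((A ^ m) w) := by
  induction m generalizing v w with
  | zero => simp
  | succ m ih =>
    rw [pow_succ', Module.End.mul_apply, hskew, ih, ← Module.End.mul_apply, ← pow_succ, pow_succ' A,
      Module.End.mul_apply]
    ring

end Polar

theorem Submodule.map_pow_le_of_map_le {ι R V : Type*} [AddMonoid ι] [Semiring R]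
    [AddCommMonoid V] [Module R V] {Vg : ι → Submodule R V} {A : Module.End R V} {d : ι}
    (hA : ∀ a, (Vg a).map A ≤ Vg (a + d)) (m : ℕ) (a : ι) :
    (Vg a).map (A ^ m) ≤ Vg (a + m • d) := by
  induction m with
  | zero => simp [Module.End.one_eq_id]
  | succ m ih =>
    rw [pow_succ', Module.End.mul_eq_comp, Submodule.map_comp, succ_nsmul, ← add_assoc]
    exact (Submodule.map_mono ih).trans (hA _)

theorem Submodule.map_eq_of_injOn_of_finrank_eq {K V : Type*} [DivisionRing K] [AddCommGroup V]
    [Module K V] [FiniteDimensional K V] {f : Module.End K V} {E F : Submodule K V} (hEF : E.map f ≤ F)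
    (hinj : ∀ x ∈ E, f x = 0 → x = 0) (hdim : Module.finrank K E = Module.finrank K F) :
    E.map f = F := by
  refine Submodule.eq_of_le_of_finrank_eq hEF ?_
  have hinj' : Function.Injective (f.domRestrict E) := by
    rw [← LinearMap.ker_eq_bot, eq_bot_iff]
    rintro ⟨x, hx⟩ hfx
    simpa using hinj x hx hfx
  rw [← LinearMap.range_domRestrict, LinearMap.finrank_range_of_inj hinj', hdim]

section SkewMap

variable {R V : Type*} [CommRing R] [AddCommGroup V] [Module R V] {Q : QuadraticForm R V}
  {P : Module.End R V} {ε : R} {E Z F : Submodule R V}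

theorem map_eq_of_map_mul_self_eq (hEZ : E.map P ≤ Z) (hZF : Z.map P ≤ F)
    (hsq : E.map (P * P) = F) : Z.map P = F := by
  refine le_antisymm hZF ?_
  rw [← hsq, Module.End.mul_eq_comp, Submodule.map_comp]
  exact Submodule.map_mono hEZ

theorem polarNondegenerate_inf_ker_of_map_mul_self_eq
    (hP : ∀ v w, polar Q (P v) w = ε * polar Q v (P w)) (hEZ : E.map P ≤ Z)
    (hZF : Z.map P ≤ F) (hsq : E.map (P * P) = F) (hZ : PolarNondegenerate Q Z Z) :
    PolarNondegenerate Q (Z ⊓ LinearMap.ker P) (Z ⊓ LinearMap.ker P) := by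
  rintro x ⟨hxZ, hxP⟩ hx
  refine hZ x hxZ fun y hy => ?_
  obtain ⟨u, hu, hPu⟩ : P y ∈ E.map (P * P) := hsq ▸ hZF ⟨y, hy, rfl⟩
  have hyu : y - P u ∈ Z ⊓ LinearMap.ker P :=
    ⟨Z.sub_mem hy (hEZ ⟨u, hu, rfl⟩), by simp [← hPu]⟩
  have hxPu : polar Q x (P u) = 0 := by
    rw [polar_comm, hP, LinearMap.mem_ker.mp hxP, polar_zero_right, mul_zero]
  rw [← sub_add_cancel y (P u), polar_add_right, hx _ hyu, hxPu, add_zero]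

theorem eq_zero_of_mul_self_apply_eq_zero
    (hP : ∀ v w, polar Q (P v) w = ε * polar Q v (P w)) (hEZ : E.map P ≤ Z)
    (hsurj : Z.map P = F)
    (hker : PolarNondegenerate Q (Z ⊓ LinearMap.ker P) (Z ⊓ LinearMap.ker P))
    (hEF : PolarNondegenerate Q E F) : ∀ u ∈ E, (P * P) u = 0 → u = 0 := by
  intro u hu hPPu
  have hPu : P u = 0 := by
    refine hker (P u) ⟨hEZ ⟨u, hu, rfl⟩, hPPu⟩ fun y ⟨_, hyP⟩ => ?_
    rw [hP, LinearMap.mem_ker.mp hyP, polar_zero_right, mul_zero]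
  refine hEF u hu fun y hy => ?_
  obtain ⟨x, -, rfl⟩ : y ∈ Z.map P := hsurj ▸ hy
  rw [polar_comm, hP, hPu, polar_zero_right, mul_zero]

end SkewMap

theorem stmt_6_general {k V : Type*} [Field k] [AddCommGroup V] [Module k V]
    [FiniteDimensional k V]
    (Vg : ℤ → Submodule k V) (hV : DirectSum.IsInternal Vg)
    (hdim : ∀ a : ℤ, Module.finrank k (Vg a) = Module.finrank k (Vg (-a)))
    (Q : QuadraticForm k V)
    (hnd : ∀ v : V, (∀ w, QuadraticMap.polar Q v w = 0) → v = 0)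
    (hortho : ∀ a b : ℤ, a + b ≠ 0 → ∀ x ∈ Vg a, ∀ y ∈ Vg b, QuadraticMap.polar Q x y = 0)
    (A : V →ₗ[k] V) (hA : ∀ a : ℤ, ∀ x ∈ Vg a, A x ∈ Vg (a + 2))
    (hskew : ∀ v w, QuadraticMap.polar Q (A v) w = - QuadraticMap.polar Q v (A w)) :
    (∀ n : ℕ, 1 ≤ n →
      Submodule.map (A ^ (2 * n)) (Vg (-(2 * (n : ℤ)))) = Vg (2 * (n : ℤ)) ∧
      ∀ x ∈ Vg (-(2 * (n : ℤ))), (A ^ (2 * n)) x = 0 → x = 0)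
    ↔ (∀ n : ℕ, 1 ≤ n →
      Submodule.map (A ^ n) (Vg 0) = Vg (2 * (n : ℤ)) ∧
      ∀ x ∈ Vg 0, (A ^ n) x = 0 →
        (∀ y ∈ Vg 0, (A ^ n) y = 0 → QuadraticMap.polar Q x y = 0) → x = 0) := by
  have hshift (m : ℕ) (a b : ℤ) (hab : a + 2 * m = b) : (Vg a).map (A ^ m) ≤ Vg b := by
    have := Submodule.map_pow_le_of_map_le (fun a => Submodule.map_le_iff_le_comap.mpr (hA a)) m a
    rwa [nsmul_eq_mul, mul_comm, hab] at this
  have hpair := polarNondegenerate_neg_of_iSup_eq_top hnd hV.submodule_iSup_eq_top hortho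
  refine forall₂_congr fun n _ => ?_
  have hEZ := hshift n (-(2 * n)) 0 (by ring)
  have hZF := hshift n 0 (2 * n) (by ring)
  have hP := polar_pow_left hskew n
  have hZ : PolarNondegenerate Q (Vg 0) (Vg 0) := by simpa using hpair 0
  have hker_iff :
      PolarNondegenerate Q (Vg 0 ⊓ LinearMap.ker (A ^ n)) (Vg 0 ⊓ LinearMap.ker (A ^ n)) ↔
      ∀ x ∈ Vg 0, (A ^ n) x = 0 →
        (∀ y ∈ Vg 0, (A ^ n) y = 0 → QuadraticMap.polar Q x y = 0) → x = 0 := by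
    simp only [PolarNondegenerate, Submodule.mem_inf, LinearMap.mem_ker, and_imp]
  rw [← hker_iff, two_mul n, pow_add]
  constructor
  · rintro ⟨hsq, -⟩
    exact ⟨map_eq_of_map_mul_self_eq hEZ hZF hsq,
      polarNondegenerate_inf_ker_of_map_mul_self_eq hP hEZ hZF hsq hZ⟩
  · rintro ⟨hsurj, hker⟩
    have hinj := eq_zero_of_mul_self_apply_eq_zero hP hEZ hsurj hker
      (by simpa using hpair (-(2 * n)))
    refine ⟨Submodule.map_eq_of_injOn_of_finrank_eq ?_ hinj ?_, hinj⟩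
    · rw [Module.End.mul_eq_comp, Submodule.map_comp, ← hsurj]
      exact Submodule.map_mono hEZ
    · rw [hdim, neg_neg]

/-- Characteristic ≠ 2: for an o-good graded quadratic space and a β-skew degree-2
endomorphism `A`, `A^{2n} : V^{-2n} → V^{2n}` is an isomorphism for all `n ≥ 1` iff
`A^n : V^0 → V^{2n}` is surjective and `Q` restricted to its kernel is nondegenerate,
for all `n ≥ 1`. -/
theorem stmt_6 {k V : Type*} [Field k] [AddCommGroup V] [Module k V]
    [FiniteDimensional k V] (hchar : (2 : k) ≠ 0)
    (Vg : ℤ → Submodule k V) (hV : DirectSum.IsInternal Vg)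
    (hdim : ∀ a : ℤ, Module.finrank k (Vg a) = Module.finrank k (Vg (-a)))
    (Q : QuadraticForm k V)
    (hnd : ∀ v : V, (∀ w, QuadraticMap.polar Q v w = 0) → v = 0)
    (hortho : ∀ a b : ℤ, a + b ≠ 0 → ∀ x ∈ Vg a, ∀ y ∈ Vg b, QuadraticMap.polar Q x y = 0)
    (hQzero : ∀ a : ℤ, a ≠ 0 → ∀ x ∈ Vg a, Q x = 0)
    (A : V →ₗ[k] V) (hA : ∀ a : ℤ, ∀ x ∈ Vg a, A x ∈ Vg (a + 2))
    (hskew : ∀ v w, QuadraticMap.polar Q (A v) w = - QuadraticMap.polar Q v (A w)) :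
    (∀ n : ℕ, 1 ≤ n →
      Submodule.map (A ^ (2 * n)) (Vg (-(2 * (n : ℤ)))) = Vg (2 * (n : ℤ)) ∧
      ∀ x ∈ Vg (-(2 * (n : ℤ))), (A ^ (2 * n)) x = 0 → x = 0)
    ↔ (∀ n : ℕ, 1 ≤ n →
      Submodule.map (A ^ n) (Vg 0) = Vg (2 * (n : ℤ)) ∧
      ∀ x ∈ Vg 0, (A ^ n) x = 0 →
        (∀ y ∈ Vg 0, (A ^ n) y = 0 → QuadraticMap.polar Q x y = 0) → x = 0) :=
  stmt_6_general Vg hV hdim Q hnd hortho A hA hskew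
end

section
/- Let V = ⊕_a V^a be an o-good graded quadratic space over an algebraically closed field of characteristic 2, and let β_ξ ∈ 𝔖(V)_2 be a symplectic form with β_ξ(V^a,V^b)=0 for a+b ≠ −2, with associated maps A : V^a → V^{a+2} (a ≠ −2) defined by β(Ax^a, x^{-a-2}) = β_ξ(x^a, x^{-a-2}). Let R = Rad(Q) ⊆ V^0, let m̄ be the unique integer with A^{m̄}R ≠ 0 and A^{m̄+1}R = 0, let v̄_{m̄} ∈ R satisfy Q(v̄_{m̄}) = 1, and v̄_i = A^{m̄−i}v̄_{m̄}. Suppose m̄ > 0 and define ū_0 ∈ V^{-2m̄} with β(ū_0, v̄_0) = 1, ū_i = A^i ū_0, and subspaces W̄^a as follows: W̄^{-2i} = {v ∈ V^{-2i} : β(v, v̄_{m̄−i}) = 0}, W̄^{2i} = {v ∈ V^{2i} : β(v, ū_{m̄−i}) = 0} for i ∈ [1,m̄], W̄^0 = {v ∈ V^0 : β_ξ(v, ū_{m̄−1}) = 0}, and W̄^a = V^a otherwise. Then A(W̄^a) ⊆ W̄^{a+2} for all a ≠ −2. -/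
/-!
For `a ∉ {0, -2}` the map `A : V^a → V^{a+2}` is skew-adjoint against `V^{-a-2}` for the polar
form `β` of `Q`: `β(A x, y) = β_ξ(x, y) = -β_ξ(y, x) = -β(x, A y)`. Away from `a = 0` each `W̄^a`
is the annihilator in `V^a` of one vector (`A^i v̄_{m̄}`, `A^{m̄-i} ū_0`, or `0`), and `A` sends the
vector of `W̄^{a+2}` to the vector of `W̄^a` (at the bottom because `A^{m̄+1} v̄_{m̄} = 0`), so
skew-adjointness carries the defining equation from `v` to `A v`. From `W̄^0` to `W̄^2` it is the
defining property `β(A v, ū_{m̄-1}) = β_ξ(v, ū_{m̄-1})` of `A` itself.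
-/

open QuadraticMap Set

section GradedSkewAdjoint

variable {k V : Type*} [Field k] [AddCommGroup V] [Module k V]
  {Vg : ℤ → Submodule k V} {Q : QuadraticForm k V} {Bξ : LinearMap.BilinForm k V}
  {A : V →ₗ[k] V}

theorem pow_apply_mem_of_ne_neg_two (hAmap : ∀ a : ℤ, a ≠ -2 → ∀ x ∈ Vg a, A x ∈ Vg (a + 2))
    {a : ℤ} {n : ℕ} (h : ∀ m < n, a + 2 * m ≠ -2) {x : V} (hx : x ∈ Vg a) :
    (A ^ n) x ∈ Vg (a + 2 * n) := by
  induction n with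
  | zero => simpa using hx
  | succ n ih =>
    rw [pow_succ', Module.End.mul_apply, Nat.cast_succ, mul_add_one, ← add_assoc]
    exact hAmap _ (h n n.lt_succ_self) _ (ih fun m hm ↦ h m (hm.trans n.lt_succ_self))

theorem polar_apply_left_eq_neg (hBalt : Bξ.IsAlt)
    (hAdef : ∀ a : ℤ, a ≠ -2 → ∀ x ∈ Vg a, ∀ y ∈ Vg (-a - 2), polar Q (A x) y = Bξ x y)
    {a : ℤ} (ha : a ≠ -2) (ha0 : a ≠ 0) {v w : V} (hv : v ∈ Vg a) (hw : w ∈ Vg (-a - 2)) :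
    polar Q (A v) w = -polar Q v (A w) := by
  have hv' : v ∈ Vg (-(-a - 2) - 2) := by rwa [show -(-a - 2) - 2 = a by ring]
  rw [hAdef a ha v hv w hw, ← LinearMap.IsAlt.neg hBalt w v, ← hAdef _ (by omega) w hw v hv',
    polar_comm]

theorem mapsTo_of_polar_apply_eq_zero (hBalt : Bξ.IsAlt)
    (hAdef : ∀ a : ℤ, a ≠ -2 → ∀ x ∈ Vg a, ∀ y ∈ Vg (-a - 2), polar Q (A x) y = Bξ x y)
    (hAmap : ∀ a : ℤ, a ≠ -2 → ∀ x ∈ Vg a, A x ∈ Vg (a + 2))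
    {a : ℤ} (ha : a ≠ -2) (ha0 : a ≠ 0) {z : V} (hz : z ∈ Vg (-a - 2)) {W W' : Set V}
    (hW : ∀ v ∈ W, v ∈ Vg a ∧ polar Q v (A z) = 0)
    (hW' : ∀ w ∈ Vg (a + 2), polar Q w z = 0 → w ∈ W') :
    MapsTo A W W' := fun v hv ↦
  hW' _ (hAmap a ha v (hW v hv).1) <| by
    rw [polar_apply_left_eq_neg hBalt hAdef ha ha0 (hW v hv).1 hz, (hW v hv).2, neg_zero]

theorem mapsTo_of_neg_even (hBalt : Bξ.IsAlt)
    (hAdef : ∀ a : ℤ, a ≠ -2 → ∀ x ∈ Vg a, ∀ y ∈ Vg (-a - 2), polar Q (A x) y = Bξ x y)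
    (hAmap : ∀ a : ℤ, a ≠ -2 → ∀ x ∈ Vg a, A x ∈ Vg (a + 2))
    {r : V} (hr0 : r ∈ Vg 0) {m : ℕ} (hAr : (A ^ (m + 1)) r = 0) {W : ℤ → Set V}
    (hW : ∀ i : ℕ, 1 ≤ i → i ≤ m → ∀ v : V,
      v ∈ W (-(2 * i)) ↔ v ∈ Vg (-(2 * i)) ∧ polar Q v ((A ^ i) r) = 0)
    (hWbot : W (-(2 * m) - 2) = Vg (-(2 * m) - 2)) {j : ℕ} (hj : 1 ≤ j) (hjm : j ≤ m) :
    MapsTo A (W (-(2 * j) - 2)) (W (-(2 * j) - 2 + 2)) := by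
  have hz : (A ^ j) r ∈ Vg (-(-(2 * j) - 2) - 2) := by
    simpa using pow_apply_mem_of_ne_neg_two hAmap (fun _ _ ↦ by omega) hr0 (n := j)
  refine mapsTo_of_polar_apply_eq_zero hBalt hAdef hAmap (by omega) (by omega) hz
    (fun v hv ↦ ?_) fun w hw hwz ↦ ?_
  · rw [← Module.End.mul_apply, ← pow_succ']
    rcases hjm.lt_or_eq with hjm | rfl
    · have e : -(2 * ((j + 1 : ℕ) : ℤ)) = -(2 * j) - 2 := by push_cast; ring
      simpa only [e] using (hW (j + 1) (by omega) hjm v).1 (e ▸ hv)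
    · rw [hWbot] at hv
      exact ⟨hv, by rw [hAr, polar_zero_right]⟩
  · rw [sub_add_cancel] at hw ⊢
    exact (hW j hj hjm w).2 ⟨hw, hwz⟩

theorem mapsTo_of_pos_even (hBalt : Bξ.IsAlt)
    (hAdef : ∀ a : ℤ, a ≠ -2 → ∀ x ∈ Vg a, ∀ y ∈ Vg (-a - 2), polar Q (A x) y = Bξ x y)
    (hAmap : ∀ a : ℤ, a ≠ -2 → ∀ x ∈ Vg a, A x ∈ Vg (a + 2))
    {m : ℕ} {u : V} (hu : u ∈ Vg (-(2 * m))) {W : ℤ → Set V}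
    (hW : ∀ i : ℕ, 1 ≤ i → i ≤ m → ∀ v : V,
      v ∈ W (2 * i) ↔ v ∈ Vg (2 * i) ∧ polar Q v ((A ^ (m - i)) u) = 0)
    {j : ℕ} (hj : 1 ≤ j) (hjm : j < m) :
    MapsTo A (W (2 * j)) (W (2 * j + 2)) := by
  have hz : (A ^ (m - (j + 1))) u ∈ Vg (-(2 * j) - 2) := by
    convert pow_apply_mem_of_ne_neg_two hAmap (fun _ _ ↦ by omega) hu (n := m - (j + 1))
      using 2
    omega
  rw [show 2 * (j : ℤ) + 2 = 2 * (j + 1 : ℕ) by push_cast; ring]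
  refine mapsTo_of_polar_apply_eq_zero hBalt hAdef hAmap (by omega) (by omega) hz
    (fun v hv ↦ ?_) fun w hw hwz ↦ (hW (j + 1) (by omega) hjm w).2 ⟨hw, hwz⟩
  rw [← Module.End.mul_apply, ← pow_succ', show m - (j + 1) + 1 = m - j by omega]
  exact (hW j hj hjm.le v).1 hv

theorem mapsTo_degree_zero
    (hAdef : ∀ a : ℤ, a ≠ -2 → ∀ x ∈ Vg a, ∀ y ∈ Vg (-a - 2), polar Q (A x) y = Bξ x y)
    (hAmap : ∀ a : ℤ, a ≠ -2 → ∀ x ∈ Vg a, A x ∈ Vg (a + 2))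
    {m : ℕ} (hm : 0 < m) {u : V} (hu : u ∈ Vg (-(2 * m))) {W : ℤ → Set V}
    (hW : ∀ i : ℕ, 1 ≤ i → i ≤ m → ∀ v : V,
      v ∈ W (2 * i) ↔ v ∈ Vg (2 * i) ∧ polar Q v ((A ^ (m - i)) u) = 0)
    (hW0 : ∀ v : V, v ∈ W 0 ↔ v ∈ Vg 0 ∧ Bξ v ((A ^ (m - 1)) u) = 0) :
    MapsTo A (W 0) (W (0 + 2)) := by
  intro v hv
  obtain ⟨hv, hvB⟩ := (hW0 v).1 hv
  have hz : (A ^ (m - 1)) u ∈ Vg (-0 - 2) := by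
    convert pow_apply_mem_of_ne_neg_two hAmap (fun _ _ ↦ by omega) hu (n := m - 1) using 2
    omega
  refine (hW 1 le_rfl hm _).2 ⟨by simpa using hAmap 0 (by norm_num) v hv, ?_⟩
  rw [hAdef 0 (by norm_num) v hv _ hz, hvB]

end GradedSkewAdjoint

theorem Int.cases_of_ne_neg_two (m : ℕ) {a : ℤ} (ha : a ≠ -2) :
    (Odd a ∨ a < -(2 * m) - 2 ∨ 2 * m < a) ∨ a = 2 * m ∨
      (∃ j : ℕ, 1 ≤ j ∧ j ≤ m ∧ a = -(2 * j) - 2) ∨ a = 0 ∨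
      (∃ j : ℕ, 1 ≤ j ∧ j < m ∧ a = 2 * j) := by
  obtain ⟨i, rfl⟩ | hodd := Int.even_or_odd a
  · obtain ⟨n, rfl | rfl⟩ := Int.eq_nat_or_neg i
    · by_cases hn : 1 ≤ n ∧ n < m
      · exact .inr <| .inr <| .inr <| .inr ⟨n, hn.1, hn.2, by ring⟩
      · omega
    · by_cases hn : 2 ≤ n ∧ n ≤ m + 1
      · exact .inr <| .inr <| .inl ⟨n - 1, by omega, by omega, by omega⟩
      · omega
  · exact .inl (.inl hodd)

theorem stmt_11_general {k V : Type*} [Field k]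
    [AddCommGroup V] [Module k V]
    (Vg : ℤ → Submodule k V)
    (Q : QuadraticForm k V)
    (Bξ : LinearMap.BilinForm k V) (hBalt : Bξ.IsAlt)
    (A : V →ₗ[k] V)
    (hAmap : ∀ a : ℤ, a ≠ -2 → ∀ x ∈ Vg a, A x ∈ Vg (a + 2))
    (hAdef : ∀ a : ℤ, a ≠ -2 → ∀ x ∈ Vg a, ∀ y ∈ Vg (-a - 2),
      QuadraticMap.polar Q (A x) y = Bξ x y)
    (mb : ℕ) (hmb : 0 < mb)
    (r : V) (hr0 : r ∈ Vg 0)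
    (hAr1 : (A ^ (mb + 1)) r = 0)
    (u0 : V) (hu0 : u0 ∈ Vg (-(2 * (mb : ℤ))))
    (vb ub : ℕ → V) (hvb : ∀ i, vb i = (A ^ (mb - i)) r) (hub : ∀ i, ub i = (A ^ i) u0)
    (Wb : ℤ → Set V)
    (hWneg : ∀ i : ℕ, 1 ≤ i → i ≤ mb → ∀ v : V,
      v ∈ Wb (-(2 * (i : ℤ))) ↔
        v ∈ Vg (-(2 * (i : ℤ))) ∧ QuadraticMap.polar Q v (vb (mb - i)) = 0)
    (hWpos : ∀ i : ℕ, 1 ≤ i → i ≤ mb → ∀ v : V,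
      v ∈ Wb (2 * (i : ℤ)) ↔
        v ∈ Vg (2 * (i : ℤ)) ∧ QuadraticMap.polar Q v (ub (mb - i)) = 0)
    (hW0 : ∀ v : V, v ∈ Wb 0 ↔ v ∈ Vg 0 ∧ Bξ v (ub (mb - 1)) = 0)
    (hWelse : ∀ a : ℤ, (Odd a ∨ a < -(2 * (mb : ℤ)) ∨ 2 * (mb : ℤ) < a) →
      Wb a = (Vg a : Set V)) :
    ∀ a : ℤ, a ≠ -2 → ∀ v ∈ Wb a, A v ∈ Wb (a + 2) := by
  intro a ha
  have hWneg_pow (i : ℕ) (hi : 1 ≤ i) (him : i ≤ mb) (v : V) :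
      v ∈ Wb (-(2 * i)) ↔ v ∈ Vg (-(2 * i)) ∧ polar Q v ((A ^ i) r) = 0 := by
    rw [hWneg i hi him, hvb, Nat.sub_sub_self him]
  have hWpos_pow (i : ℕ) (hi : 1 ≤ i) (him : i ≤ mb) (v : V) :
      v ∈ Wb (2 * i) ↔ v ∈ Vg (2 * i) ∧ polar Q v ((A ^ (mb - i)) u0) = 0 := by
    rw [hWpos i hi him, hub]
  rcases Int.cases_of_ne_neg_two mb ha with hfar | rfl | ⟨j, hj, hjm, rfl⟩ | rfl | ⟨j, hj, hjm, rfl⟩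
  · obtain ⟨h₁, h₂⟩ : (Odd a ∨ a < -(2 * mb) ∨ 2 * mb < a) ∧
        (Odd (a + 2) ∨ a + 2 < -(2 * mb) ∨ 2 * mb < a + 2) := by
      rcases hfar with h | h | h
      exacts [⟨.inl h, .inl (h.add_even even_two)⟩, by omega, by omega]
    rw [hWelse a h₁, hWelse _ h₂]
    exact hAmap a ha
  · rw [hWelse (2 * mb + 2) (by omega)]
    exact fun v hv ↦ hAmap _ ha v ((hWpos mb hmb le_rfl v).1 hv).1
  · exact mapsTo_of_neg_even hBalt hAdef hAmap hr0 hAr1 hWneg_pow (hWelse _ (by omega)) hj hjm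
  · exact mapsTo_degree_zero hAdef hAmap hmb hu0 hWpos_pow (by simpa only [hub] using hW0)
  · exact mapsTo_of_pos_even hBalt hAdef hAmap hu0 hWpos_pow hj hjm

/-- Section 3.2: with `m̄ > 0`, the subspaces `W̄^a` built from `v̄_i = A^{m̄-i} v̄_m̄`
(`v̄_m̄` the radical vector with `Q = 1`) and `ū_i = A^i ū_0` satisfy
`A(W̄^a) ⊆ W̄^{a+2}` for all `a ≠ -2`. -/
theorem stmt_11 {k V : Type*} [Field k] [CharP k 2] [IsAlgClosed k]
    [AddCommGroup V] [Module k V] [FiniteDimensional k V]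
    (Vg : ℤ → Submodule k V) (hV : DirectSum.IsInternal Vg)
    (Q : QuadraticForm k V)
    (hortho : ∀ a b : ℤ, a + b ≠ 0 → ∀ x ∈ Vg a, ∀ y ∈ Vg b, QuadraticMap.polar Q x y = 0)
    (hQzero : ∀ a : ℤ, a ≠ 0 → ∀ x ∈ Vg a, Q x = 0)
    (Bξ : LinearMap.BilinForm k V) (hBalt : Bξ.IsAlt)
    (hB2 : ∀ a b : ℤ, a + b ≠ -2 → ∀ x ∈ Vg a, ∀ y ∈ Vg b, Bξ x y = 0)
    (A : V →ₗ[k] V)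
    (hAmap : ∀ a : ℤ, a ≠ -2 → ∀ x ∈ Vg a, A x ∈ Vg (a + 2))
    (hAdef : ∀ a : ℤ, a ≠ -2 → ∀ x ∈ Vg a, ∀ y ∈ Vg (-a - 2),
      QuadraticMap.polar Q (A x) y = Bξ x y)
    (mb : ℕ) (hmb : 0 < mb)
    (r : V) (hrrad : ∀ w, QuadraticMap.polar Q r w = 0) (hr0 : r ∈ Vg 0) (hQr : Q r = 1)
    (hAr : (A ^ mb) r ≠ 0) (hAr1 : (A ^ (mb + 1)) r = 0)
    (u0 : V) (hu0 : u0 ∈ Vg (-(2 * (mb : ℤ))))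
    (hu0v : QuadraticMap.polar Q u0 ((A ^ mb) r) = 1)
    (vb ub : ℕ → V) (hvb : ∀ i, vb i = (A ^ (mb - i)) r) (hub : ∀ i, ub i = (A ^ i) u0)
    (Wb : ℤ → Set V)
    (hWneg : ∀ i : ℕ, 1 ≤ i → i ≤ mb → ∀ v : V,
      v ∈ Wb (-(2 * (i : ℤ))) ↔
        v ∈ Vg (-(2 * (i : ℤ))) ∧ QuadraticMap.polar Q v (vb (mb - i)) = 0)
    (hWpos : ∀ i : ℕ, 1 ≤ i → i ≤ mb → ∀ v : V,
      v ∈ Wb (2 * (i : ℤ)) ↔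
        v ∈ Vg (2 * (i : ℤ)) ∧ QuadraticMap.polar Q v (ub (mb - i)) = 0)
    (hW0 : ∀ v : V, v ∈ Wb 0 ↔ v ∈ Vg 0 ∧ Bξ v (ub (mb - 1)) = 0)
    (hWelse : ∀ a : ℤ, (Odd a ∨ a < -(2 * (mb : ℤ)) ∨ 2 * (mb : ℤ) < a) →
      Wb a = (Vg a : Set V)) :
    ∀ a : ℤ, a ≠ -2 → ∀ v ∈ Wb a, A v ∈ Wb (a + 2) :=
  stmt_11_general Vg Q Bξ hBalt A hAmap hAdef mb hmb r hr0 hAr1 u0 hu0 vb ub hvb hub Wb hWneg hWpos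
    hW0 hWelse
end

section
/- Let (V,Q) be a nondegenerate quadratic space in characteristic 2 with polar form β, ξ ∈ 𝔬(V)* with associated alternating form β_ξ. Then the coadjoint stabilizer Z_G(ξ) of ξ in G = SO(V) coincides with {g ∈ G : β_ξ(gv, gv') = β_ξ(v,v') for all v, v' ∈ V}. -/
/-!
Put `D = γ X γ⁻¹ - X`. Since `tr (X ∘ γ⁻¹ x γ) = tr (γ X γ⁻¹ ∘ x)`, the element `γ` fixes `ξ` iff
`tr (D x) = 0` for every `x ∈ 𝔬(V)`, while `γ` preserves `β_ξ` iff `D` is `β`-self-adjoint.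
These two conditions on `D` agree. The rank-two maps `u ↦ β(w,u) v - β(v,u) w` lie in `𝔬(V)` and
pair with `D` to `β(w, D v) - β(v, D w)`. Conversely, choose `e_i, f_i` with
`u ≡ ∑ β(f_i,u) e_i` modulo the radical; then `tr (D x)` is the contraction of the symmetric
matrix `β(f_i, D f_j)` with the alternating form `β(·, x ·)`, which is zero.
-/

open LinearMap (BilinForm IsAdjointPair)

theorem LinearMap.IsAlt.sum_sum_mul_eq_zero {R M ι : Type*} [CommRing R] [AddCommGroup M]
    [Module R M] [Fintype ι] {ω : M →ₗ[R] M →ₗ[R] R} (hω : ω.IsAlt)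
    {N : ι → ι → R} (hN : ∀ i j, N i j = N j i) (e : ι → M) :
    ∑ i, ∑ j, N i j * ω (e i) (e j) = 0 := by
  rw [← Fintype.sum_prod_type']
  refine Finset.sum_ninvolution Prod.swap (fun p => ?_) (fun p hp => ?_)
    (fun _ => Finset.mem_univ _) Prod.swap_swap
  · rw [Prod.fst_swap, Prod.snd_swap, hN p.2 p.1, ← hω.neg, mul_neg, neg_add_cancel]
  · rintro h
    rw [show p.2 = p.1 from congrArg Prod.fst h, hω.self_eq_zero, mul_zero] at hp
    exact hp rfl

theorem Module.End.mul_smulRight {R M : Type*} [CommSemiring R] [AddCommMonoid M] [Module R M]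
    (D : Module.End R M) (f : M →ₗ[R] R) (x : M) : D * f.smulRight x = f.smulRight (D x) :=
  LinearMap.ext fun _ => D.map_smul _ _

theorem LinearMap.trace_mul_symm_conj {R M : Type*} [CommRing R] [AddCommGroup M] [Module R M]
    (γ : M ≃ₗ[R] M) (X Y : Module.End R M) :
    LinearMap.trace R M (X * γ.symm.conj Y) = LinearMap.trace R M (γ.conj X * Y) := by
  rw [← LinearMap.trace_conj' _ γ, Module.End.mul_eq_comp, LinearEquiv.conj_comp,
    LinearEquiv.conj_conj_symm, Module.End.mul_eq_comp]

namespace LinearMap.BilinForm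

section CommRing

variable {R M : Type*} [CommRing R] [AddCommGroup M] [Module R M] {B : BilinForm R M}

/-- For the polar form of a quadratic form in characteristic 2, these endomorphisms form the
orthogonal Lie algebra `𝔬(V)`. -/
def IsAltEnd (B : BilinForm R M) (Y : Module.End R M) : Prop :=
  (∀ v, B (Y v) v = 0) ∧ ∀ v, (∀ w, B v w = 0) → Y v = 0

variable {γ : M ≃ₗ[R] M} (hγ : ∀ v w, B (γ v) (γ w) = B v w)
include hγ

theorem IsAltEnd.symm_conj {Y : Module.End R M} (hY : B.IsAltEnd Y) :
    B.IsAltEnd (γ.symm.conj Y) := by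
  have hγ' : ∀ v w, B (γ.symm v) w = B v (γ w) := fun v w => by
    rw [← hγ, γ.apply_symm_apply]
  refine ⟨fun v => ?_, fun v hv => ?_⟩
  · rw [LinearEquiv.conj_apply_apply, LinearEquiv.symm_symm, hγ', hY.1]
  · rw [LinearEquiv.conj_apply_apply, LinearEquiv.symm_symm,
      hY.2 (γ v) fun w => by rw [← γ.apply_symm_apply w, hγ, hv], map_zero]

theorem isAdjointPair_conj_sub_iff {X : Module.End R M} :
    IsAdjointPair B B ⇑(γ.conj X - X) ⇑(γ.conj X - X) ↔
      ∀ v w, B (X (γ v)) (γ w) - B (γ v) (X (γ w)) = B (X v) w - B v (X w) := by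
  refine γ.surjective.forall.trans <| forall_congr' fun v =>
    γ.surjective.forall.trans <| forall_congr' fun w => ?_
  simp only [LinearMap.sub_apply, LinearEquiv.conj_apply_apply, γ.symm_apply_apply, map_sub, hγ]
  constructor <;> intro h <;> linear_combination -h

end CommRing

section Field

variable {k V : Type*} [Field k] [AddCommGroup V] [Module k V] [FiniteDimensional k V]
  {B : BilinForm k V}

theorem IsSymm.exists_eq_of_ker_le (hB : B.IsSymm) {φ : Module.Dual k V}
    (hφ : LinearMap.ker B ≤ LinearMap.ker φ) : ∃ f, B f = φ := by
  obtain ⟨ψ, rfl⟩ : φ ∈ LinearMap.range B.dualMap := by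
    rw [LinearMap.range_dualMap_eq_dualAnnihilator_ker]
    exact (Submodule.mem_dualAnnihilator φ).2 fun r hr => hφ hr
  obtain ⟨f, rfl⟩ := (Module.evalEquiv k V).surjective ψ
  exact ⟨f, LinearMap.ext fun v => hB.eq f v⟩

theorem IsSymm.exists_sub_sum_smul_mem_ker (hB : B.IsSymm) :
    ∃ (n : ℕ) (e f : Fin n → V), ∀ x, x - ∑ j, B (f j) x • e j ∈ LinearMap.ker B := by
  obtain ⟨W, hW⟩ := (LinearMap.ker B).exists_isCompl
  let b := Module.finBasis k W
  choose f hf using fun j => hB.exists_eq_of_ker_le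
    (φ := b.coord j ∘ₗ W.projectionOnto _ hW.symm) fun r hr => by
      simp [Submodule.projectionOnto_apply_of_mem_right hW.symm hr]
  refine ⟨_, fun j => b j, f, fun x => ?_⟩
  have hsum : ∑ j, B (f j) x • (b j : V) = W.projection _ hW.symm x := by
    simp_rw [hf, Submodule.projection_apply]
    conv_rhs => rw [← b.sum_repr (W.projectionOnto _ hW.symm x)]
    rw [Submodule.coe_sum]
    simp only [Submodule.coe_smul, LinearMap.comp_apply, Module.Basis.coord_apply]
  rw [hsum]
  exact Submodule.sub_projection_mem hW.symm x

theorem trace_mul_eq_zero_of_isAltEnd (hB : B.IsSymm) {D Y : Module.End k V}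
    (hD : IsAdjointPair B B D D) (hY : B.IsAltEnd Y) : LinearMap.trace k V (D * Y) = 0 := by
  obtain ⟨n, e, f, hef⟩ := hB.exists_sub_sum_smul_mem_ker
  have hBexp : ∀ x y, B x y = ∑ i, B (f i) x * B (e i) y := fun x y => by
    simpa [sub_eq_zero, Finset.sum_apply] using LinearMap.congr_fun (hef x) y
  have hYexp : Y = ∑ j, (B (f j)).smulRight (Y (e j)) := by
    ext x
    simpa [sub_eq_zero] using hY.2 _ fun w => LinearMap.congr_fun (hef x) w
  have hN : ∀ i j, B (f i) (D (f j)) = B (f j) (D (f i)) := fun i j => by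
    rw [← hD, hB.eq]
  have hω : (B.compl₂ Y).IsAlt := fun u => by
    rw [LinearMap.compl₂_apply, hB.eq, hY.1]
  calc LinearMap.trace k V (D * Y) = ∑ j, B (f j) (D (Y (e j))) := by
        conv_lhs => rw [hYexp]
        simp_rw [Finset.mul_sum, map_sum, Module.End.mul_smulRight, LinearMap.trace_smulRight]
    _ = ∑ j, ∑ i, B (f i) (D (f j)) * B (e i) (Y (e j)) := by
        refine Finset.sum_congr rfl fun j _ => ?_
        rw [← hD, hBexp]
    _ = 0 := by
        rw [Finset.sum_comm]
        exact hω.sum_sum_mul_eq_zero hN e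

theorem isAdjointPair_of_forall_trace_mul_eq_zero (hB : B.IsSymm) {D : Module.End k V}
    (h : ∀ Y, B.IsAltEnd Y → LinearMap.trace k V (D * Y) = 0) : IsAdjointPair B B D D := by
  intro v w
  let Y := (B w).smulRight v - (B v).smulRight w
  have hY : B.IsAltEnd Y := by
    refine ⟨fun u => ?_, fun u hu => ?_⟩
    · simp [Y, mul_comm]
    · simp [Y, hB.eq w u, hB.eq v u, hu]
  have := h Y hY
  rw [mul_sub, map_sub, Module.End.mul_smulRight, Module.End.mul_smulRight,
    LinearMap.trace_smulRight, LinearMap.trace_smulRight, sub_eq_zero] at this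
  rw [hB.eq, this, hB.eq]

theorem isAdjointPair_iff_forall_trace_mul_eq_zero (hB : B.IsSymm) {D : Module.End k V} :
    IsAdjointPair B B D D ↔ ∀ Y, B.IsAltEnd Y → LinearMap.trace k V (D * Y) = 0 :=
  ⟨fun hD _ hY => trace_mul_eq_zero_of_isAltEnd hB hD hY,
    isAdjointPair_of_forall_trace_mul_eq_zero hB⟩

end Field

end LinearMap.BilinForm

open LinearMap.BilinForm in
theorem stmt_13_general {k V : Type*} [Field k]
    [AddCommGroup V] [Module k V] [FiniteDimensional k V]
    (Q : QuadraticForm k V)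
    (g : Submodule k (Module.End k V))
    (hgmem : ∀ X : Module.End k V, X ∈ g ↔
      ((∀ v, QuadraticMap.polar Q (X v) v = 0) ∧
       ∀ v, (∀ w, QuadraticMap.polar Q v w = 0) → X v = 0))
    (ξ : Module.Dual k g) (X : Module.End k V)
    (hX : ∀ x : g, ξ x = LinearMap.trace k V (X * (x : Module.End k V)))
    (γ : V ≃ₗ[k] V) (hγ : ∀ v, Q (γ v) = Q v) :
    (∀ x y : g, (y : Module.End k V) =
        γ.symm.toLinearMap ∘ₗ (x : Module.End k V) ∘ₗ γ.toLinearMap → ξ y = ξ x)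
    ↔ (∀ v w : V,
        QuadraticMap.polar Q (X (γ v)) (γ w) - QuadraticMap.polar Q (γ v) (X (γ w)) =
        QuadraticMap.polar Q (X v) w - QuadraticMap.polar Q v (X w)) := by
  let B : BilinForm k V := QuadraticMap.polarBilin Q
  have hB : B.IsSymm := ⟨QuadraticMap.polar_comm Q⟩
  have hγB : ∀ v w, B (γ v) (γ w) = B v w := fun v w => by
    simp only [B, QuadraticMap.polarBilin_apply_apply, QuadraticMap.polar, ← map_add, hγ]
  have hg : ∀ Y, Y ∈ g ↔ B.IsAltEnd Y := hgmem
  have hconj (x : g) : γ.symm.conj (x : Module.End k V) ∈ g :=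
    (hg _).2 <| ((hg x).1 x.2).symm_conj hγB
  have hξ (x : g) :
      ξ ⟨γ.symm.conj x, hconj x⟩ - ξ x = LinearMap.trace k V ((γ.conj X - X) * x) := by
    rw [hX, hX, sub_mul, map_sub, LinearMap.trace_mul_symm_conj]
  refine Iff.trans ?_ (isAdjointPair_conj_sub_iff hγB)
  rw [isAdjointPair_iff_forall_trace_mul_eq_zero hB]
  constructor
  · intro h Y hY
    rw [← hξ ⟨Y, (hg Y).2 hY⟩, h _ _ rfl, sub_self]
  · intro h x y hy
    obtain rfl : y = ⟨γ.symm.conj x, hconj x⟩ := Subtype.ext hy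
    rw [← sub_eq_zero, hξ, h _ ((hg x).1 x.2)]

/-- For `ξ ∈ 𝔬(V)*` with associated alternating form `β_ξ`, an orthogonal
transformation `γ` fixes `ξ` under the coadjoint action iff it preserves `β_ξ`. -/
theorem stmt_13 {k V : Type*} [Field k] [CharP k 2]
    [AddCommGroup V] [Module k V] [FiniteDimensional k V]
    (Q : QuadraticForm k V)
    (hQ : ∀ v, (∀ w, QuadraticMap.polar Q v w = 0) → v ≠ 0 → Q v ≠ 0)
    (g : Submodule k (Module.End k V))
    (hgmem : ∀ X : Module.End k V, X ∈ g ↔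
      ((∀ v, QuadraticMap.polar Q (X v) v = 0) ∧
       ∀ v, (∀ w, QuadraticMap.polar Q v w = 0) → X v = 0))
    (ξ : Module.Dual k g) (X : Module.End k V)
    (hX : ∀ x : g, ξ x = LinearMap.trace k V (X * (x : Module.End k V)))
    (γ : V ≃ₗ[k] V) (hγ : ∀ v, Q (γ v) = Q v) :
    (∀ x y : g, (y : Module.End k V) =
        γ.symm.toLinearMap ∘ₗ (x : Module.End k V) ∘ₗ γ.toLinearMap → ξ y = ξ x)
    ↔ (∀ v w : V,
        QuadraticMap.polar Q (X (γ v)) (γ w) - QuadraticMap.polar Q (γ v) (X (γ w)) =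
        QuadraticMap.polar Q (X v) w - QuadraticMap.polar Q v (X w)) :=
  stmt_13_general Q g hgmem ξ X hX γ hγ
end

section
/- Let V = ⊕_a V^a be a graded vector space with a nondegenerate quadratic form Q in characteristic 2 such that β(V^a,V^b)=0 for a+b≠0 and Q|_{V^a}=0 for a≠0 and Rad(Q) = 0 (dim V^0 even). Let A : V^a → V^{a+2} for all a be linear maps with β(Aw,w') = β(w,Aw'), with associated alternating form β_ξ(w,w')=β(Aw,w'). Then the following are equivalent: (a1') for all n ≥ 1, A^n : V^0 → V^{2n} is surjective and Q|_{ker(A^n : V^0 → V^{2n})} is nondegenerate; (a1) for all n ≥ 1, the map A^n : V^{-2n} → V^0 is injective and Q restricted to Im(A^n : V^{-2n} → V^0) is nondegenerate. -/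
open QuadraticMap Module

section Aux

variable {k V : Type*} [Field k] [CharP k 2]
    [AddCommGroup V] [Module k V] [FiniteDimensional k V]

/-- Self-adjointness of `A` w.r.t. the polar form, from `β(Av,v)=0`. -/
theorem aux_selfadj (Q : QuadraticForm k V) (A : V →ₗ[k] V)
    (hAo : ∀ v, QuadraticMap.polar Q (A v) v = 0) (v w : V) :
    QuadraticMap.polar (⇑Q) (A v) w = QuadraticMap.polar (⇑Q) v (A w) := by
  have h := hAo (v + w)
  simp only [map_add, QuadraticMap.polar_add_left, QuadraticMap.polar_add_right] at h
  rw [hAo v, hAo w] at h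
  have h2 : QuadraticMap.polar (⇑Q) (A v) w = - QuadraticMap.polar (⇑Q) (A w) v := by
    linear_combination h
  rw [h2, CharTwo.neg_eq, QuadraticMap.polar_comm]

/-- If two subspaces are "separated" by the polar form, dimensions compare. -/
theorem aux_dimle (Q : QuadraticForm k V) (W₁ W₂ : Submodule k V)
    (hsep : ∀ x ∈ W₁, (∀ y ∈ W₂, QuadraticMap.polar (⇑Q) x y = 0) → x = 0) :
    finrank k W₁ ≤ finrank k W₂ := by
  let φ : W₁ →ₗ[k] (W₂ →ₗ[k] k) := (Q.polarBilin).domRestrict₁₂ W₁ W₂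
  have hinj : Function.Injective φ := by
    rw [injective_iff_map_eq_zero]
    intro x hx
    have hx0 : (x : V) = 0 := by
      refine hsep x x.2 (fun y hy => ?_)
      have := DFunLike.congr_fun hx ⟨y, hy⟩
      simpa [φ, LinearMap.domRestrict₁₂_apply, QuadraticMap.polarBilin_apply_apply] using this
    exact Subtype.ext hx0
  calc finrank k W₁ ≤ finrank k (W₂ →ₗ[k] k) :=
        LinearMap.finrank_le_finrank_of_injective hinj
    _ = finrank k W₂ := Subspace.dual_finrank_eq

end Aux

/-- Equivalence (a1) ⟺ (a1'): in a graded quadratic space of characteristic 2 with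
trivial radical, `A^n : V^0 → V^{2n}` is surjective with `Q` nondegenerate on its
kernel for all `n ≥ 1` iff `A^n : V^{-2n} → V^0` is injective with `Q` nondegenerate
on its image for all `n ≥ 1`. -/
theorem stmt_14 {k V : Type*} [Field k] [CharP k 2]
    [AddCommGroup V] [Module k V] [FiniteDimensional k V]
    (Vg : ℤ → Submodule k V) (hV : DirectSum.IsInternal Vg)
    (Q : QuadraticForm k V)
    (hortho : ∀ a b : ℤ, a + b ≠ 0 → ∀ x ∈ Vg a, ∀ y ∈ Vg b, QuadraticMap.polar Q x y = 0)
    (hQzero : ∀ a : ℤ, a ≠ 0 → ∀ x ∈ Vg a, Q x = 0)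
    (hrad : ∀ v : V, (∀ w, QuadraticMap.polar Q v w = 0) → v = 0)
    (A : V →ₗ[k] V) (hA : ∀ a : ℤ, ∀ x ∈ Vg a, A x ∈ Vg (a + 2))
    (hAo : ∀ v, QuadraticMap.polar Q (A v) v = 0) :
    (∀ n : ℕ, 1 ≤ n →
      Submodule.map (A ^ n) (Vg 0) = Vg (2 * (n : ℤ)) ∧
      (∀ x ∈ Vg 0, (A ^ n) x = 0 →
        (∀ y ∈ Vg 0, (A ^ n) y = 0 → QuadraticMap.polar Q x y = 0) → x = 0))
    ↔ (∀ n : ℕ, 1 ≤ n →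
      (∀ x ∈ Vg (-(2 * (n : ℤ))), (A ^ n) x = 0 → x = 0) ∧
      (∀ x ∈ Submodule.map (A ^ n) (Vg (-(2 * (n : ℤ)))),
        (∀ y ∈ Submodule.map (A ^ n) (Vg (-(2 * (n : ℤ)))),
          QuadraticMap.polar Q x y = 0) → x = 0)) := by
  -- self-adjointness of powers of A
  have hsa := aux_selfadj Q A hAo
  have hsan : ∀ (n : ℕ) (v w : V),
      QuadraticMap.polar (⇑Q) ((A ^ n) v) w = QuadraticMap.polar (⇑Q) v ((A ^ n) w) := by
    intro n
    induction n with
    | zero => intro v w; simp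
    | succ m ih =>
      intro v w
      rw [pow_succ, Module.End.mul_apply, Module.End.mul_apply]
      have hc : A ((A ^ m) w) = (A ^ m) (A w) := by
        have h1 : A * A ^ m = A ^ m * A := (pow_succ' A m).symm.trans (pow_succ A m)
        calc A ((A ^ m) w) = (A * A ^ m) w := rfl
          _ = (A ^ m * A) w := by rw [h1]
          _ = (A ^ m) (A w) := rfl
      rw [ih (A v) w, hsa v ((A ^ m) w), hc]
  -- A^n shifts grading by 2n
  have hAn : ∀ (n : ℕ) (a : ℤ), ∀ x ∈ Vg a, (A ^ n) x ∈ Vg (a + 2 * (n : ℤ)) := by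
    intro n
    induction n with
    | zero => intro a x hx; simpa using hx
    | succ m ih =>
      intro a x hx
      rw [pow_succ]
      have h1 : A x ∈ Vg (a + 2) := hA a x hx
      have h2 := ih (a + 2) (A x) h1
      have he : a + 2 + 2 * (m : ℤ) = a + 2 * ((m : ℤ) + 1) := by ring
      rw [he] at h2
      simpa [Module.End.mul_apply, Nat.cast_succ] using h2
  -- separation: β pairs Vg a with Vg (-a)
  have sep : ∀ (a : ℤ) (x : V), x ∈ Vg a →
      (∀ z ∈ Vg (-a), QuadraticMap.polar (⇑Q) x z = 0) → x = 0 := by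
    intro a x hx h
    apply hrad
    intro w
    have hker : ∀ b : ℤ, Vg b ≤ LinearMap.ker (Q.polarBilin x) := by
      intro b z hz
      rw [LinearMap.mem_ker, QuadraticMap.polarBilin_apply_apply]
      by_cases hb : b = -a
      · exact h z (hb ▸ hz)
      · exact hortho a b (by omega) x hx z hz
    have htop : (⊤ : Submodule k V) ≤ LinearMap.ker (Q.polarBilin x) := by
      rw [← hV.submodule_iSup_eq_top]
      exact iSup_le hker
    have := htop (Submodule.mem_top : w ∈ (⊤ : Submodule k V))
    rw [LinearMap.mem_ker, QuadraticMap.polarBilin_apply_apply] at this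
    exact this
  -- equality of dimensions of paired graded pieces
  have dimeq : ∀ a : ℤ, finrank k (Vg a) = finrank k (Vg (-a)) := by
    intro a
    apply le_antisymm
    · exact aux_dimle Q _ _ (fun x hx h => sep a x hx h)
    · refine aux_dimle Q _ _ (fun x hx h => sep (-a) x hx (fun z hz => ?_))
      rw [neg_neg] at hz
      exact h z hz
  constructor
  · -- (a1') → (a1)
    intro h n hn
    obtain ⟨hsurj, hK⟩ := h n hn
    have hinj : ∀ x ∈ Vg (-(2 * (n : ℤ))), (A ^ n) x = 0 → x = 0 := by
      intro x hx hx0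
      refine sep (-(2 * (n : ℤ))) x hx (fun z hz => ?_)
      rw [neg_neg, ← hsurj] at hz
      obtain ⟨y, hy, rfl⟩ := hz
      rw [← hsan n x y, hx0, QuadraticMap.polar_zero_left]
    refine ⟨hinj, ?_⟩
    intro x hxmem hxorth
    obtain ⟨u, hu, rfl⟩ := hxmem
    have hx0 : (A ^ n) u ∈ Vg 0 := by
      have := hAn n _ u hu
      rwa [show (-(2 * (n : ℤ)) + 2 * (n : ℤ)) = 0 by ring] at this
    refine hK _ hx0 ?_ ?_
    · -- A^n (A^n u) = 0
      have hmem2 : (A ^ n) ((A ^ n) u) ∈ Vg (2 * (n : ℤ)) := by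
        have := hAn n 0 _ hx0
        rwa [zero_add] at this
      refine sep (2 * (n : ℤ)) _ hmem2 (fun z hz => ?_)
      rw [hsan n]
      exact hxorth _ ⟨z, hz, rfl⟩
    · intro y hy hy0
      rw [hsan n, hy0, QuadraticMap.polar_zero_right]
  · -- (a1) → (a1')
    intro h n hn
    obtain ⟨hinj, hI⟩ := h n hn
    set I : Submodule k V := Submodule.map (A ^ n) (Vg (-(2 * (n : ℤ)))) with hIdef
    set K : Submodule k V := Vg 0 ⊓ LinearMap.ker (A ^ n) with hKdef
    have hI0 : I ≤ Vg 0 := by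
      rintro _ ⟨u, hu, rfl⟩
      have := hAn n _ u hu
      rwa [show (-(2 * (n : ℤ)) + 2 * (n : ℤ)) = 0 by ring] at this
    -- orthogonality of elements of K against I
    have hKorthI : ∀ v ∈ K, ∀ w ∈ I, QuadraticMap.polar (⇑Q) v w = 0 := by
      rintro v hv _ ⟨u, hu, rfl⟩
      have hv0 : (A ^ n) v = 0 := hv.2
      rw [QuadraticMap.polar_comm, hsan n u v, hv0, QuadraticMap.polar_zero_right]
    -- surjectivity of A^n : V^0 → V^{2n}
    have hW : Submodule.map (A ^ n) (Vg 0) ≤ Vg (2 * (n : ℤ)) := by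
      rintro _ ⟨y, hy, rfl⟩
      have := hAn n 0 y hy
      rwa [zero_add] at this
    have hsep2 : ∀ x ∈ Vg (-(2 * (n : ℤ))),
        (∀ w ∈ Submodule.map (A ^ n) (Vg 0), QuadraticMap.polar (⇑Q) x w = 0) → x = 0 := by
      intro x hx hx0
      have hAx : (A ^ n) x ∈ Vg 0 := by
        have := hAn n _ x hx
        rwa [show (-(2 * (n : ℤ)) + 2 * (n : ℤ)) = 0 by ring] at this
      have hAx0 : (A ^ n) x = 0 := by
        refine sep 0 _ hAx (fun z hz => ?_)
        rw [neg_zero] at hz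
        rw [hsan n]
        exact hx0 _ ⟨z, hz, rfl⟩
      exact hinj x hx hAx0
    have hdim1 : finrank k (Vg (-(2 * (n : ℤ)))) ≤ finrank k (Submodule.map (A ^ n) (Vg 0)) :=
      aux_dimle Q _ _ hsep2
    have hsurj : Submodule.map (A ^ n) (Vg 0) = Vg (2 * (n : ℤ)) := by
      refine Submodule.eq_of_le_of_finrank_le hW ?_
      calc finrank k (Vg (2 * (n : ℤ))) = finrank k (Vg (-(2 * (n : ℤ)))) := dimeq _
        _ ≤ finrank k (Submodule.map (A ^ n) (Vg 0)) := hdim1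
    refine ⟨hsurj, ?_⟩
    -- nondegeneracy on the kernel
    -- first: dimension bookkeeping to get Vg 0 = I ⊔ K
    have hIK : I ⊓ K = ⊥ := by
      rw [eq_bot_iff]
      intro v hv
      have hv1 : v ∈ I := hv.1
      have hv2 : v ∈ K := hv.2
      have : v = 0 := hI v hv1 (fun w hw => hKorthI v hv2 w hw)
      simpa using this
    -- finrank I = finrank Vg(-2n)
    have hfI : finrank k I = finrank k (Vg (-(2 * (n : ℤ)))) := by
      let f := (A ^ n).domRestrict (Vg (-(2 * (n : ℤ))))
      have hker : LinearMap.ker f = ⊥ := by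
        rw [eq_bot_iff]
        intro x hx
        rw [LinearMap.mem_ker] at hx
        have : (x : V) = 0 := hinj x x.2 hx
        simpa [Submodule.mem_bot] using Subtype.ext this
      have hrn := LinearMap.finrank_range_add_finrank_ker f
      rw [hker, LinearMap.range_domRestrict, finrank_bot, add_zero] at hrn
      rw [← hIdef] at hrn
      exact hrn
    -- finrank Vg 0 = finrank Vg(2n) + finrank K
    have hfK : finrank k (Vg (2 * (n : ℤ))) + finrank k K = finrank k (Vg 0) := by
      let g := (A ^ n).domRestrict (Vg 0)
      have hrn := LinearMap.finrank_range_add_finrank_ker g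
      rw [LinearMap.range_domRestrict, hsurj, LinearMap.ker_domRestrict] at hrn
      have hcomap : Submodule.comap (Vg 0).subtype (LinearMap.ker (A ^ n)) =
          Submodule.comap (Vg 0).subtype K := by
        ext x
        simp [hKdef, Submodule.mem_comap, x.2]
      have hle : K ≤ Vg 0 := inf_le_left
      have heq : finrank k (Submodule.comap (Vg 0).subtype K) = finrank k K :=
        (Submodule.comapSubtypeEquivOfLe hle).finrank_eq
      rw [hcomap, heq] at hrn
      exact hrn
    have hsup : I ⊔ K = Vg 0 := by
      have hle : I ⊔ K ≤ Vg 0 := sup_le hI0 inf_le_left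
      refine (Submodule.eq_of_le_of_finrank_le hle ?_)
      have hd := Submodule.finrank_sup_add_finrank_inf_eq I K
      rw [hIK] at hd
      have hbot : finrank k (⊥ : Submodule k V) = 0 := finrank_bot k V
      have hd2 : finrank k ↥(I ⊔ K) = finrank k I + finrank k K := by omega
      rw [hd2, hfI, ← dimeq (2 * (n : ℤ))]
      omega
    -- conclude
    intro x hx hx0 horth
    have hxVg0 : x ∈ Vg 0 := hx
    refine sep 0 x hxVg0 (fun w hw => ?_)
    rw [neg_zero] at hw
    rw [← hsup] at hw
    obtain ⟨i, hi, kk, hkk, rfl⟩ := Submodule.mem_sup.mp hw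
    rw [QuadraticMap.polar_add_right]
    obtain ⟨u, hu, rfl⟩ := hi
    have h1 : QuadraticMap.polar (⇑Q) x ((A ^ n) u) = 0 := by
      rw [← hsan n x u, hx0, QuadraticMap.polar_zero_left]
    have h2 : QuadraticMap.polar (⇑Q) x kk = 0 := horth kk hkk.1 hkk.2
    rw [h1, h2, add_zero]
end
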